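/- arXiv:2107.08705 — 12 statements merged into one kernel-verified Lean document; each statement's English description precedes it below -/
import Mathlib

section
/- Let V be a vector space of arbitrary dimension over a field K equipped with two inner products ⟨·,·⟩₀ and ⟨·,·⟩₁, where ⟨·,·⟩₀ is nondegenerate, and endow V with the ⟨·,·⟩₀-topology. Then ⟨·,·⟩₁ is partially continuous if and only if there exists a continuous linear map T : V → V such that ⟨x,y⟩₁ = ⟨T(x),y⟩₀ for all x,y ∈ V. -/
/-- The `⟨·,·⟩`-topology on `V` determined by a bilinear form `B`: the initial (weak)
topology determined by the maps `x ↦ B v x` into `K` with the discrete topology. -/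
def weakTopology {K V : Type*} [Field K] [AddCommGroup V] [Module K V]
    (B : V →ₗ[K] V →ₗ[K] K) : TopologicalSpace V :=
  ⨅ v : V, TopologicalSpace.induced (fun x => B v x) (⊥ : TopologicalSpace K)

open Filter LinearMap Submodule in
/-- A linear functional continuous for the weak topology is represented by `B0`. -/
lemma exists_rep_of_continuous {K V : Type*} [Field K] [AddCommGroup V] [Module K V]
    (B0 : V →ₗ[K] V →ₗ[K] K) (f : V →ₗ[K] K)
    (hf : @Continuous V K (weakTopology B0) ⊥ (fun y => f y)) :
    ∃ w : V, ∀ y, f y = B0 w y := by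
  letI : TopologicalSpace V := weakTopology B0
  letI : TopologicalSpace K := ⊥
  haveI : DiscreteTopology K := ⟨rfl⟩
  -- `ker f` (as a set) is a neighborhood of 0
  have hker : {x : V | f x = 0} ∈ @nhds V (weakTopology B0) 0 := by
    have : IsOpen ((fun y => f y) ⁻¹' {0}) := hf.isOpen_preimage {0} (isOpen_discrete _)
    exact this.mem_nhds (by simp)
  have hnhds : @nhds V (weakTopology B0) 0 =
      ⨅ v : V, Filter.comap (fun x => B0 v x) (pure 0) := by
    rw [weakTopology, _root_.nhds_iInf]
    congr 1
    funext v
    rw [nhds_induced]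
    simp
  rw [hnhds, Filter.mem_iInf] at hker
  obtain ⟨I, hIfin, W, hW, hs⟩ := hker
  haveI := hIfin.to_subtype
  -- intersection of kernels is contained in ker f
  have hsub : (⨅ v : I, ker (B0 (v : V))) ≤ ker f := by
    intro x hx
    simp only [Submodule.mem_iInf, LinearMap.mem_ker] at hx
    have hx' : x ∈ ⋂ v : I, W v := by
      refine Set.mem_iInter.2 fun v => ?_
      obtain ⟨t, ht, hts⟩ := hW v
      have h0t : (0 : K) ∈ t := Filter.mem_pure.1 ht
      refine hts ?_
      show (B0 (v : V)) x ∈ t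
      rw [hx v]
      exact h0t
    rw [← hs] at hx'
    exact hx'
  have hspan : f ∈ span K (Set.range fun v : I => B0 (v : V)) :=
    mem_span_of_iInf_ker_le_ker hsub
  have hrange : f ∈ LinearMap.range B0 := by
    refine span_le.2 ?_ hspan
    rintro _ ⟨v, rfl⟩
    exact ⟨(v : V), rfl⟩
  obtain ⟨w, hw⟩ := hrange
  exact ⟨w, fun y => by rw [← hw]⟩

/-- For inner products `B₀` (nondegenerate) and `B₁` on `V`, with `V` carrying the
`B₀`-topology: `B₁` is partially continuous iff there is a continuous linear map
`T : V → V` with `B₁ x y = B₀ (T x) y` for all `x, y`. -/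
theorem partiallyContinuous_iff_exists_continuous_linearMap
    {K V : Type*} [Field K] [AddCommGroup V] [Module K V]
    (B0 B1 : V →ₗ[K] V →ₗ[K] K)
    (h0sym : ∀ x y, B0 x y = B0 y x)
    (h1sym : ∀ x y, B1 x y = B1 y x)
    (h0nd : ∀ x : V, (∀ v : V, B0 x v = 0) → x = 0) :
    (∀ x : V,
        @Continuous V K (weakTopology B0) ⊥ (fun y => B1 x y) ∧
        @Continuous V K (weakTopology B0) ⊥ (fun y => B1 y x)) ↔
      (∃ T : V →ₗ[K] V,
        @Continuous V V (weakTopology B0) (weakTopology B0) T ∧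
        ∀ x y, B1 x y = B0 (T x) y) := by
  have uniq : ∀ a b : V, (∀ y, B0 a y = B0 b y) → a = b := by
    intro a b hab
    have h : a - b = 0 := h0nd _ fun v => by simp [hab v]
    exact sub_eq_zero.mp h
  constructor
  · intro h
    choose w hw using fun x => exists_rep_of_continuous B0 (B1 x) (h x).1
    have wadd : ∀ x x' : V, w (x + x') = w x + w x' := by
      intro x x'
      refine uniq _ _ fun y => ?_
      rw [← hw (x + x') y]
      simp [map_add, ← hw x y, ← hw x' y]
    have wsmul : ∀ (c : K) (x : V), w (c • x) = c • w x := by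
      intro c x
      refine uniq _ _ fun y => ?_
      rw [← hw (c • x) y]
      simp [← hw x y]
    refine ⟨⟨⟨w, wadd⟩, wsmul⟩, ?_, fun x y => hw x y⟩
    -- continuity of T
    rw [show (weakTopology B0 : TopologicalSpace V) =
        ⨅ v : V, TopologicalSpace.induced (fun x => B0 v x) (⊥ : TopologicalSpace K) from rfl]
    refine continuous_iInf_rng.2 fun v => continuous_induced_rng.2 ?_
    show @Continuous V K (weakTopology B0) ⊥ fun x => B0 v (w x)
    have he : (fun x : V => B0 v (w x)) = fun x : V => B1 x v := by
      funext x
      rw [h0sym, ← hw x v]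
    rw [he]
    exact (h v).2
  · rintro ⟨T, hTc, hT⟩
    intro x
    have hcont : ∀ v : V, @Continuous V K (weakTopology B0) ⊥ (fun y => B0 v y) := by
      intro v
      exact continuous_iInf_dom (continuous_induced_dom (t := (⊥ : TopologicalSpace K)))
    constructor
    · have : (fun y => B1 x y) = fun y => B0 (T x) y := by
        funext y; rw [hT]
      rw [this]
      exact hcont (T x)
    · have : (fun y => B1 y x) = fun y => B0 (T x) y := by
        funext y; rw [h1sym, hT]
      rw [this]
      exact hcont (T x)
end

section
/- Let V be a vector space of arbitrary dimension over a field K equipped with two inner products ⟨·,·⟩₀ and ⟨·,·⟩₁, where ⟨·,·⟩₀ is nondegenerate. If ⟨·,·⟩₀ and ⟨·,·⟩₁ are simultaneously orthogonalizable (there is a basis of V orthogonal for both), then ⟨·,·⟩₁ is partially continuous with respect to the ⟨·,·⟩₀-topology of V. -/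
/-- If `B₀` is nondegenerate and `B₀`, `B₁` are simultaneously orthogonalizable,
then `B₁` is partially continuous with respect to the `B₀`-topology of `V`. -/
theorem partiallyContinuous_of_simultaneously_orthogonalizable
    {K V : Type*} [Field K] [AddCommGroup V] [Module K V]
    (B0 B1 : V →ₗ[K] V →ₗ[K] K)
    (h0sym : ∀ x y, B0 x y = B0 y x)
    (h1sym : ∀ x y, B1 x y = B1 y x)
    (h0nd : ∀ x : V, (∀ v : V, B0 x v = 0) → x = 0)
    (horth : ∃ (s : Set V) (b : Module.Basis s K V), ∀ v w : s, v ≠ w →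
        B0 (b v) (b w) = 0 ∧ B1 (b v) (b w) = 0) :
    ∀ x : V,
      @Continuous V K (weakTopology B0) ⊥ (fun y => B1 x y) ∧
      @Continuous V K (weakTopology B0) ⊥ (fun y => B1 y x) := by
  obtain ⟨s, b, hb⟩ := horth
  letI tV : TopologicalSpace V := weakTopology B0
  letI tK : TopologicalSpace K := ⊥
  haveI : DiscreteTopology K := ⟨rfl⟩
  have hcont0 : ∀ v : V, Continuous fun y => B0 v y := by
    intro v
    exact continuous_iInf_dom (i := v) continuous_induced_dom
  have hbne : ∀ i : s, B0 (b i) (b i) ≠ 0 := by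
    intro i h
    have hz : B0 (b i) = 0 := by
      apply b.ext
      intro j
      by_cases hij : j = i
      · subst hij; simpa using h
      · exact (hb i j (fun e => hij e.symm)).1
    have : b i = 0 := h0nd _ (fun v => by rw [hz]; rfl)
    exact b.ne_zero i this
  have key : ∀ i : s, B1 (b i) = (B1 (b i) (b i) / B0 (b i) (b i)) • B0 (b i) := by
    intro i
    apply b.ext
    intro j
    by_cases hij : j = i
    · subst hij
      simp only [LinearMap.smul_apply, smul_eq_mul]
      field_simp
      rw [mul_div_assoc, div_self (hbne j), mul_one]
    · have h := hb i j (fun e => hij e.symm)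
      simp [h.1, h.2]
  have hcont1 : ∀ x, Continuous fun y => B1 x y := by
    intro x
    have hx : x ∈ Submodule.span K (Set.range (b : s → V)) := by
      rw [b.span_eq]; trivial
    induction hx using Submodule.span_induction with
    | mem v hv =>
      obtain ⟨i, rfl⟩ := hv
      have : (fun y => B1 (b i) y) =
          (fun t => (B1 (b i) (b i) / B0 (b i) (b i)) * t) ∘ (fun y => B0 (b i) y) := by
        funext y
        have hk : B1 (b i) y = (B1 (b i) (b i) / B0 (b i) (b i)) * B0 (b i) y := by
          conv_lhs => rw [key i]
          simp
        simpa [Function.comp] using hk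
      rw [this]
      exact continuous_of_discreteTopology.comp (hcont0 _)
    | zero => simpa using continuous_const
    | add a c ha hc iha ihc =>
      have : (fun y => B1 (a + c) y) =
          (fun p : K × K => p.1 + p.2) ∘ (fun y => (B1 a y, B1 c y)) := by
        funext y; simp [map_add]
      rw [this]
      exact continuous_of_discreteTopology.comp (iha.prodMk ihc)
    | smul r v hv ihv =>
      have : (fun y => B1 (r • v) y) = (fun t => r * t) ∘ (fun y => B1 v y) := by
        funext y; simp [map_smul]
      rw [this]
      exact continuous_of_discreteTopology.comp ihv
  intro x
  refine ⟨hcont1 x, ?_⟩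
  have : (fun y => B1 y x) = fun y => B1 x y := funext fun y => h1sym y x
  rw [this]
  exact hcont1 x
end

section
/- Let F = {⟨·,·⟩ᵢ}_{i∈I∪{0}} be a nondegenerate family of inner products on a K-vector space V of arbitrary dimension (so ⟨·,·⟩₀ is nondegenerate and each ⟨·,·⟩ᵢ is partially continuous relative to the ⟨·,·⟩₀-topology). Then for each i ∈ I there exists a continuous linear map Tᵢ : V → V such that ⟨x,y⟩ᵢ = ⟨Tᵢ(x),y⟩₀ for all x,y ∈ V, and each Tᵢ is self-adjoint relative to ⟨·,·⟩₀, i.e., ⟨Tᵢ(x),y⟩₀ = ⟨x,Tᵢ(y)⟩₀ for all x,y. -/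
/-- A linear functional continuous for the weak topology of `B0` is represented by `B0`. -/
lemma exists_rep_of_continuous_s7 {K V : Type*} [Field K] [AddCommGroup V] [Module K V]
    (B0 : V →ₗ[K] V →ₗ[K] K) (g : V →ₗ[K] K)
    (hg : @Continuous V K (weakTopology B0) ⊥ g) : g ∈ LinearMap.range B0 := by
  letI : TopologicalSpace K := ⊥
  letI : TopologicalSpace V := weakTopology B0
  haveI : DiscreteTopology K := ⟨rfl⟩
  have hopen : @IsOpen V (weakTopology B0) (g ⁻¹' {0}) :=
    hg.isOpen_preimage {0} (isOpen_discrete _)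
  have hmem : (g ⁻¹' {0}) ∈ @nhds V (weakTopology B0) 0 :=
    hopen.mem_nhds (by simp)
  rw [show (weakTopology B0) = ⨅ v : V,
      TopologicalSpace.induced (fun x => B0 v x) (⊥ : TopologicalSpace K) from rfl,
    nhds_iInf] at hmem
  simp only [nhds_induced] at hmem
  rw [Filter.mem_iInf] at hmem
  obtain ⟨s, hsfin, U, hU, hUeq⟩ := hmem
  have hker : (⨅ v : s, LinearMap.ker (B0 v)) ≤ LinearMap.ker g := by
    intro y hy
    have hy' : ∀ v : s, y ∈ U v := by
      intro v
      obtain ⟨t, ht, htsub⟩ := Filter.mem_comap.1 (hU v)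
      apply htsub
      have : B0 (v : V) y = B0 (v : V) 0 := by
        simp only [Submodule.mem_iInf, LinearMap.mem_ker] at hy
        simp [hy v]
      rw [Set.mem_preimage, this]
      exact mem_of_mem_nhds ht
    have : y ∈ g ⁻¹' {0} := by rw [hUeq]; exact Set.mem_iInter.2 hy'
    simpa using this
  haveI : Finite s := hsfin
  have hspan : g ∈ Submodule.span K (Set.range fun v : s => B0 (v : V)) :=
    mem_span_of_iInf_ker_le_ker hker
  refine Submodule.span_le.2 ?_ hspan
  rintro _ ⟨v, rfl⟩
  exact ⟨v, rfl⟩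

/-- For a nondegenerate family `{Bᵢ}ᵢ∪{B₀}` of inner products (`B₀` nondegenerate, each
`Bᵢ` partially continuous for the `B₀`-topology), each `Bᵢ` is represented as
`Bᵢ x y = B₀ (Tᵢ x) y` by a continuous linear map `Tᵢ` which is `B₀`-self-adjoint. -/
theorem nondegenerate_family_representation
    {K V I : Type*} [Field K] [AddCommGroup V] [Module K V]
    (B0 : V →ₗ[K] V →ₗ[K] K) (B : I → V →ₗ[K] V →ₗ[K] K)
    (h0sym : ∀ x y, B0 x y = B0 y x)
    (hisym : ∀ i, ∀ x y, B i x y = B i y x)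
    (h0nd : ∀ x : V, (∀ v : V, B0 x v = 0) → x = 0)
    (hpc : ∀ i, ∀ x : V,
      @Continuous V K (weakTopology B0) ⊥ (fun y => B i x y) ∧
      @Continuous V K (weakTopology B0) ⊥ (fun y => B i y x)) :
    ∀ i, ∃ T : V →ₗ[K] V,
      @Continuous V V (weakTopology B0) (weakTopology B0) T ∧
      (∀ x y, B i x y = B0 (T x) y) ∧
      (∀ x y, B0 (T x) y = B0 x (T y)) := by
  intro i
  have hinj : Function.Injective B0 := by
    rw [injective_iff_map_eq_zero]
    intro x hx
    exact h0nd x fun v => by rw [hx]; rfl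
  have hmem : ∀ x : V, B i x ∈ LinearMap.range B0 := fun x =>
    exists_rep_of_continuous_s7 B0 (B i x) (by
      have := (hpc i x).1
      convert this using 1)
  let e := LinearEquiv.ofInjective B0 hinj
  let T : V →ₗ[K] V := e.symm.toLinearMap ∘ₗ (B i).codRestrict (LinearMap.range B0) hmem
  have hT : ∀ x : V, B0 (T x) = B i x := by
    intro x
    have : (e (T x) : V →ₗ[K] K) = B i x := by
      show ((e (e.symm _)) : V →ₗ[K] K) = B i x
      rw [e.apply_symm_apply]
      rfl
    rw [← this]
    rfl
  refine ⟨T, ?_, ?_, ?_⟩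
  · letI : TopologicalSpace K := (⊥ : TopologicalSpace K)
    letI : TopologicalSpace V := weakTopology B0
    rw [show (weakTopology B0 : TopologicalSpace V) = ⨅ v : V,
        TopologicalSpace.induced (fun x => B0 v x) (⊥ : TopologicalSpace K) from rfl]
    refine continuous_iInf_rng.2 fun v => continuous_induced_rng.2 ?_
    have : (fun x : V => B0 v (T x)) = fun x : V => B i v x := by
      funext x
      rw [h0sym v (T x), hT x, hisym i x v]
    rw [show ((fun x : V => B0 v x) ∘ T) = fun x : V => B0 v (T x) from rfl, this]
    exact (hpc i v).1
  · intro x y; rw [hT x]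
  · intro x y
    rw [hT x, hisym i x y, h0sym x (T y), hT y]
end

section
/- Let F = {⟨·,·⟩ᵢ}_{i∈I∪{0}} be a nondegenerate family of inner products on a K-vector space V of arbitrary dimension, and for each i ∈ I let Tᵢ : V → V be the (unique) linear map with ⟨x,y⟩ᵢ = ⟨Tᵢ(x),y⟩₀ for all x,y ∈ V. Then F is simultaneously orthogonalizable if and only if there exists a basis B of V which is orthogonal relative to ⟨·,·⟩₀ and such that every Tᵢ is diagonalized by B, i.e., Tᵢ(v) ∈ K·v for every i ∈ I and every v ∈ B. -/

private lemma eval_orth {K V ι : Type*} [Field K] [AddCommGroup V] [Module K V]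
    (B0 : V →ₗ[K] V →ₗ[K] K) (b : Module.Basis ι K V)
    (horth : ∀ v w : ι, v ≠ w → B0 (b v) (b w) = 0) (x : V) (w : ι) :
    B0 x (b w) = b.repr x w * B0 (b w) (b w) := by
  conv_lhs => rw [← b.linearCombination_repr x, Finsupp.linearCombination_apply]
  rw [map_finsuppSum]
  simp only [Finsupp.sum, map_smul, LinearMap.coe_sum, Finset.sum_apply,
    LinearMap.smul_apply, smul_eq_mul]
  rw [Finset.sum_eq_single w]
  · intro v _ hvw
    rw [horth v w hvw, mul_zero]
  · intro hw
    rw [Finsupp.notMem_support_iff.mp hw, zero_mul]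

private lemma diag_ne_zero {K V ι : Type*} [Field K] [AddCommGroup V] [Module K V]
    (B0 : V →ₗ[K] V →ₗ[K] K) (h0sym : ∀ x y, B0 x y = B0 y x)
    (h0nd : ∀ x : V, (∀ v : V, B0 x v = 0) → x = 0) (b : Module.Basis ι K V)
    (horth : ∀ v w : ι, v ≠ w → B0 (b v) (b w) = 0) (w : ι) :
    B0 (b w) (b w) ≠ 0 := by
  intro hzero
  apply b.ne_zero w
  apply h0nd
  intro u
  rw [h0sym, eval_orth B0 b horth u w, hzero, mul_zero]

/-- For a nondegenerate family `{Bᵢ}ᵢ∪{B₀}` with representing maps `Tᵢ`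
(`Bᵢ x y = B₀ (Tᵢ x) y`): the family is simultaneously orthogonalizable iff there is a
basis of `V`, orthogonal with respect to `B₀`, which diagonalizes every `Tᵢ`. -/
theorem simOrth_iff_exists_orthogonal_diagonalizing_basis
    {K V I : Type*} [Field K] [AddCommGroup V] [Module K V]
    (B0 : V →ₗ[K] V →ₗ[K] K) (B : I → V →ₗ[K] V →ₗ[K] K)
    (h0sym : ∀ x y, B0 x y = B0 y x)
    (hisym : ∀ i, ∀ x y, B i x y = B i y x)
    (h0nd : ∀ x : V, (∀ v : V, B0 x v = 0) → x = 0)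
    (hpc : ∀ i, ∀ x : V,
      @Continuous V K (weakTopology B0) ⊥ (fun y => B i x y) ∧
      @Continuous V K (weakTopology B0) ⊥ (fun y => B i y x))
    (T : I → V →ₗ[K] V)
    (hT : ∀ i, ∀ x y, B i x y = B0 (T i x) y) :
    (∃ (s : Set V) (b : Module.Basis s K V), ∀ v w : s, v ≠ w →
        B0 (b v) (b w) = 0 ∧ ∀ i, B i (b v) (b w) = 0) ↔
      (∃ (s : Set V) (b : Module.Basis s K V),
        (∀ v w : s, v ≠ w → B0 (b v) (b w) = 0) ∧
        ∀ i, ∀ v : s, ∃ c : K, T i (b v) = c • b v) := by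
  classical
  constructor
  · rintro ⟨s, b, h⟩
    refine ⟨s, b, fun v w hvw => (h v w hvw).1, fun i v => ?_⟩
    have horth : ∀ v w : s, v ≠ w → B0 (b v) (b w) = 0 := fun v w hvw => (h v w hvw).1
    refine ⟨b.repr (T i (b v)) v, b.repr.injective ?_⟩
    rw [map_smul, b.repr_self, Finsupp.smul_single, smul_eq_mul, mul_one]
    ext w
    by_cases hw : w = v
    · subst hw; simp
    · rw [Finsupp.single_apply, if_neg (Ne.symm hw)]
      have h1 : B0 (T i (b v)) (b w) = 0 := by
        rw [← hT i (b v) (b w)]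
        exact (h v w (Ne.symm hw)).2 i
      rw [eval_orth B0 b horth (T i (b v)) w] at h1
      exact (mul_eq_zero.mp h1).resolve_right
        (diag_ne_zero B0 h0sym h0nd b horth w)
  · rintro ⟨s, b, horth, hdiag⟩
    refine ⟨s, b, fun v w hvw => ⟨horth v w hvw, fun i => ?_⟩⟩
    obtain ⟨c, hc⟩ := hdiag i v
    rw [hT i (b v) (b w), hc, map_smul, LinearMap.smul_apply, horth v w hvw,
      smul_zero]
end

section
/- Let K be a field with char(K) ≠ 2 and let V be a K-vector space whose dimension is finite or countably infinite. Let F = {⟨·,·⟩ᵢ}_{i∈I∪{0}} be a nondegenerate family of inner products on V, and for each i ∈ I let Tᵢ : V → V be the (unique) linear map with ⟨x,y⟩ᵢ = ⟨Tᵢ(x),y⟩₀ for all x,y ∈ V. Then F is simultaneously orthogonalizable if and only if the family {Tᵢ}_{i∈I} is simultaneously diagonalizable. -/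
section Aux
variable {K V : Type*} [Field K] [AddCommGroup V] [Module K V]

lemma plane_lemma (h2 : (2 : K) ≠ 0) (B : V →ₗ[K] V →ₗ[K] K)
    (hsym : ∀ x y, B x y = B y x) {r w : V} (hr : B r r = 0) (ha : B r w ≠ 0) :
    ∃ p q : V, B p p ≠ 0 ∧ B q q ≠ 0 ∧ B p q = 0 ∧
      p ∈ Submodule.span K {r, w} ∧ q ∈ Submodule.span K {r, w} ∧
      r ∈ Submodule.span K {p, q} ∧ w ∈ Submodule.span K {p, q} := by
  classical
  set a := B r w with haa
  set d := B w w with hdd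
  obtain ⟨t, ht1, htp⟩ : ∃ t : K, t * t = 1 ∧ 2 * t * a + d ≠ 0 := by
    by_cases h : 2 * a + d = 0
    · refine ⟨-1, by ring, ?_⟩
      have h4 : (4 : K) ≠ 0 := by
        have := mul_ne_zero h2 h2
        norm_num at this ⊢
        exact this
      intro hcon
      apply mul_ne_zero h4 ha
      linear_combination h - hcon
    · exact ⟨1, by ring, by simpa using h⟩
  set p := r + t • w with hp
  have hwr : B w r = a := hsym w r
  have hBpp : B p p = 2 * t * a + d := by
    simp only [hp, map_add, map_smul, LinearMap.add_apply, LinearMap.smul_apply, smul_eq_mul]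
    rw [hr, hwr, ← haa, ← hdd]
    linear_combination d * ht1
  have hBpp0 : B p p ≠ 0 := by rw [hBpp]; exact htp
  have hwp : B w p = a + t * d := by
    simp only [hp, map_add, map_smul, smul_eq_mul, hwr, ← hdd]
  obtain ⟨c, hc⟩ : ∃ c : K, c = B w p / B p p := ⟨_, rfl⟩
  have hcBpp : c * B p p = a + t * d := by
    rw [hc, div_mul_cancel₀ _ hBpp0, hwp]
  set q := w - c • p with hq
  have hqp : B q p = 0 := by
    simp only [hq, map_sub, map_smul, LinearMap.sub_apply, LinearMap.smul_apply, smul_eq_mul]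
    rw [hwp, ← hcBpp]
    ring
  have hpq : B p q = 0 := by rw [hsym]; exact hqp
  have hpw : B p w = a + t * d := by rw [hsym]; exact hwp
  have hqq_eq : B q q = d - c * (a + t * d) := by
    simp only [hq, map_sub, map_smul, LinearMap.sub_apply, LinearMap.smul_apply, smul_eq_mul]
    rw [hpw, hwp, ← hdd, hBpp]
    linear_combination c * hcBpp - c^2 * hBpp
  have hBqq : B q q ≠ 0 := by
    rw [hqq_eq]
    intro h0
    -- d = c*(a+t*d); multiply by (2ta+d): d(2ta+d) = (a+td)^2 ⇒ a^2 = 0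
    apply ha
    have ha2 : a ^ 2 = 0 := by
      rw [hBpp] at hcBpp
      linear_combination (-(a + t * d)) * hcBpp - (2 * t * a + d) * h0 - d ^ 2 * ht1
    exact pow_eq_zero_iff (n := 2) (by norm_num) |>.mp ha2
  have hpmem : p ∈ Submodule.span K ({r, w} : Set V) := by
    rw [hp]
    exact Submodule.add_mem _ (Submodule.subset_span (by simp))
      (Submodule.smul_mem _ _ (Submodule.subset_span (by simp)))
  have hqmem : q ∈ Submodule.span K ({r, w} : Set V) := by
    rw [hq]
    exact Submodule.sub_mem _ (Submodule.subset_span (by simp)) (Submodule.smul_mem _ _ hpmem)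
  have hwmem : w ∈ Submodule.span K ({p, q} : Set V) := by
    have : w = q + c • p := by rw [hq]; abel
    rw [this]
    exact Submodule.add_mem _ (Submodule.subset_span (by simp))
      (Submodule.smul_mem _ _ (Submodule.subset_span (by simp)))
  have hrmem : r ∈ Submodule.span K ({p, q} : Set V) := by
    have : r = p - t • q - (t * c) • p := by rw [hq, hp]; module
    rw [this]
    exact Submodule.sub_mem _ (Submodule.sub_mem _ (Submodule.subset_span (by simp))
      (Submodule.smul_mem _ _ (Submodule.subset_span (by simp))))
      (Submodule.smul_mem _ _ (Submodule.subset_span (by simp)))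
  exact ⟨p, q, hBpp0, hBqq, hpq, hpmem, hqmem, hrmem, hwmem⟩

lemma step_lemma (h2 : (2 : K) ≠ 0) (B : V →ₗ[K] V →ₗ[K] K)
    (hsym : ∀ x y, B x y = B y x) (hnd : ∀ x : V, (∀ y, B x y = 0) → x = 0)
    (t : Finset V) (horth : ∀ v ∈ t, ∀ w ∈ t, v ≠ w → B v w = 0)
    (han : ∀ v ∈ t, B v v ≠ 0) (x : V) :
    ∃ t' : Finset V, t ⊆ t' ∧
      ((∀ v ∈ t', ∀ w ∈ t', v ≠ w → B v w = 0) ∧ ∀ v ∈ t', B v v ≠ 0) ∧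
      x ∈ Submodule.span K (t' : Set V) := by
  classical
  have proj : ∀ y : V, ∀ v ∈ t, B (y - ∑ u ∈ t, (B y u / B u u) • u) v = 0 := by
    intro y v hv
    have hs : B (∑ u ∈ t, (B y u / B u u) • u) v = B y v := by
      rw [map_sum, LinearMap.sum_apply]
      rw [Finset.sum_eq_single v]
      · simp only [map_smul, LinearMap.smul_apply, smul_eq_mul]
        exact div_mul_cancel₀ _ (han v hv)
      · intro u hu hne
        simp only [map_smul, LinearMap.smul_apply, smul_eq_mul]
        rw [horth u hu v hv hne, mul_zero]
      · intro h; exact absurd hv h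
    rw [map_sub, LinearMap.sub_apply, hs, sub_self]
  have projmem : ∀ y : V, (∑ u ∈ t, (B y u / B u u) • u) ∈ Submodule.span K (t : Set V) :=
    fun y => Submodule.sum_mem _ fun u hu =>
      Submodule.smul_mem _ _ (Submodule.subset_span hu)
  set r := x - ∑ u ∈ t, (B x u / B u u) • u with hrdef
  have hrt : ∀ v ∈ t, B r v = 0 := proj x
  have htr : ∀ v ∈ t, B v r = 0 := fun v hv => (hsym v r).trans (hrt v hv)
  have hxr : x = r + ∑ u ∈ t, (B x u / B u u) • u := by rw [hrdef]; abel
  by_cases hr0 : r = 0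
  · refine ⟨t, subset_rfl, ⟨horth, han⟩, ?_⟩
    rw [hxr, hr0, zero_add]; exact projmem x
  by_cases hrr : B r r = 0
  · -- isotropic remainder: use the plane lemma
    have hex : ∃ u : V, B r u ≠ 0 := by
      by_contra h; push_neg at h; exact hr0 (hnd r h)
    obtain ⟨u, hu⟩ := hex
    set w := u - ∑ v ∈ t, (B u v / B v v) • v with hwdef
    have hwt : ∀ v ∈ t, B w v = 0 := proj u
    have hrw : B r w ≠ 0 := by
      have : B r w = B r u - ∑ v ∈ t, (B u v / B v v) * B r v := by
        simp [hwdef, map_sub, map_sum, map_smul, smul_eq_mul]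
      rw [this, Finset.sum_eq_zero (fun v hv => by rw [hrt v hv, mul_zero]), sub_zero]
      exact hu
    obtain ⟨p, q, hpp, hqq, hpq, hpmem, hqmem, hrmem, hwmem⟩ := plane_lemma h2 B hsym hrr hrw
    have horthT : ∀ v ∈ t, B p v = 0 ∧ B q v = 0 := by
      intro v hv
      have hker : Submodule.span K ({r, w} : Set V) ≤ LinearMap.ker (B.flip v) := by
        rw [Submodule.span_le]
        rintro z hz
        rcases Set.mem_insert_iff.mp hz with rfl | hz
        · simpa [LinearMap.mem_ker, LinearMap.flip_apply] using hrt v hv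
        · rcases Set.mem_singleton_iff.mp hz with rfl
          simpa [LinearMap.mem_ker, LinearMap.flip_apply] using hwt v hv
      constructor
      · simpa [LinearMap.flip_apply] using hker hpmem
      · simpa [LinearMap.flip_apply] using hker hqmem
    have hsubq : t ⊆ insert p (insert q t) :=
      (Finset.subset_insert _ _).trans (Finset.subset_insert _ _)
    refine ⟨insert p (insert q t), hsubq, ⟨?_, ?_⟩, ?_⟩
    · intro a ha b hb hab
      simp only [Finset.mem_insert] at ha hb
      rcases ha with rfl | rfl | ha <;> rcases hb with rfl | rfl | hb
      · exact absurd rfl hab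
      · exact hpq
      · exact (horthT _ hb).1
      · rw [hsym]; exact hpq
      · exact absurd rfl hab
      · exact (horthT _ hb).2
      · rw [hsym]; exact (horthT _ ha).1
      · rw [hsym]; exact (horthT _ ha).2
      · exact horth _ ha _ hb hab
    · intro v hv
      simp only [Finset.mem_insert] at hv
      rcases hv with rfl | rfl | hv
      · exact hpp
      · exact hqq
      · exact han _ hv
    · rw [hxr]
      apply Submodule.add_mem
      · refine Submodule.span_le.mpr ?_ hrmem
        intro z hz
        rcases Set.mem_insert_iff.mp hz with rfl | hz
        · exact Submodule.subset_span (by simp)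
        · rcases Set.mem_singleton_iff.mp hz with rfl
          exact Submodule.subset_span (by simp)
      · exact Submodule.span_mono (by exact_mod_cast hsubq) (projmem x)
  · -- anisotropic remainder: just insert it
    refine ⟨insert r t, Finset.subset_insert _ _, ⟨?_, ?_⟩, ?_⟩
    · intro a ha b hb hab
      rcases Finset.mem_insert.mp ha with rfl | ha <;>
        rcases Finset.mem_insert.mp hb with rfl | hb
      · exact absurd rfl hab
      · exact hrt _ hb
      · exact htr _ ha
      · exact horth _ ha _ hb hab
    · intro v hv
      rcases Finset.mem_insert.mp hv with rfl | hv
      · exact hrr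
      · exact han _ hv
    · rw [hxr]
      exact Submodule.add_mem _ (Submodule.subset_span (by simp))
        (Submodule.span_mono (by exact_mod_cast Finset.subset_insert r t) (projmem x))

lemma countable_spanning (hrank : Module.rank K V ≤ Cardinal.aleph0) :
    ∃ e : ℕ → V, Submodule.span K (Set.range e) = ⊤ := by
  classical
  let b := Module.Basis.ofVectorSpace K V
  have hmk : Cardinal.mk (Module.Basis.ofVectorSpaceIndex K V) ≤ Cardinal.aleph0 := by
    rw [b.mk_eq_rank'']
    exact hrank
  have hco : Countable (Module.Basis.ofVectorSpaceIndex K V) :=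
    Cardinal.mk_le_aleph0_iff.mp hmk
  rcases isEmpty_or_nonempty (Module.Basis.ofVectorSpaceIndex K V) with hempty | hne
  · refine ⟨fun _ => 0, ?_⟩
    rw [eq_top_iff]
    intro y _
    have hy : y ∈ Submodule.span K (Set.range b) := by rw [b.span_eq]; trivial
    rw [Set.range_eq_empty (f := (b : _ → V))] at hy
    rw [Submodule.span_empty] at hy
    rw [Submodule.mem_bot] at hy
    rw [hy]
    exact Submodule.zero_mem _
  · obtain ⟨f, hf⟩ := exists_surjective_nat (Module.Basis.ofVectorSpaceIndex K V)
    refine ⟨fun n => b (f n), ?_⟩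
    have : Set.range (fun n => b (f n)) = Set.range b := hf.range_comp b
    rw [this, b.span_eq]

lemma exists_orth_spanning (h2 : (2 : K) ≠ 0) (hrank : Module.rank K V ≤ Cardinal.aleph0)
    (B : V →ₗ[K] V →ₗ[K] K) (hsym : ∀ x y, B x y = B y x)
    (hnd : ∀ x : V, (∀ y, B x y = 0) → x = 0) :
    ∃ s : Set V, (∀ v ∈ s, ∀ w ∈ s, v ≠ w → B v w = 0) ∧ (∀ v ∈ s, B v v ≠ 0) ∧
      Submodule.span K s = ⊤ := by
  classical
  obtain ⟨e, he⟩ := countable_spanning (K := K) (V := V) hrank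
  let P : Finset V → Prop := fun t =>
    (∀ v ∈ t, ∀ w ∈ t, v ≠ w → B v w = 0) ∧ ∀ v ∈ t, B v v ≠ 0
  have hstep : ∀ t : Finset V, P t → ∀ x : V, ∃ t' : Finset V, t ⊆ t' ∧ P t' ∧
      x ∈ Submodule.span K (t' : Set V) :=
    fun t ht x => step_lemma h2 B hsym hnd t ht.1 ht.2 x
  let F : ℕ → {t : Finset V // P t} → {t : Finset V // P t} := fun n t =>
    ⟨(hstep t.1 t.2 (e n)).choose, (hstep t.1 t.2 (e n)).choose_spec.2.1⟩
  let c : ℕ → {t : Finset V // P t} := fun n =>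
    Nat.rec ⟨∅, by constructor <;> simp⟩ F n
  have hcs : ∀ n, c (n + 1) = F n (c n) := fun n => rfl
  have hsub : ∀ n, (c n).1 ⊆ (c (n + 1)).1 := by
    intro n
    rw [hcs]
    exact (hstep (c n).1 (c n).2 (e n)).choose_spec.1
  have hespan : ∀ n, e n ∈ Submodule.span K (((c (n + 1)).1 : Finset V) : Set V) := by
    intro n
    rw [hcs]
    exact (hstep (c n).1 (c n).2 (e n)).choose_spec.2.2
  have hmono : ∀ m n, m ≤ n → (c m).1 ⊆ (c n).1 := by
    intro m n h
    induction h with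
    | refl => exact subset_rfl
    | step _ ih => exact ih.trans (hsub _)
  refine ⟨⋃ n, (((c n).1 : Finset V) : Set V), ?_, ?_, ?_⟩
  · intro v hv w hw hvw
    obtain ⟨m, hm⟩ := Set.mem_iUnion.mp hv
    obtain ⟨n, hn⟩ := Set.mem_iUnion.mp hw
    exact (c (max m n)).2.1 v (hmono m _ (le_max_left m n) hm) w
      (hmono n _ (le_max_right m n) hn) hvw
  · intro v hv
    obtain ⟨m, hm⟩ := Set.mem_iUnion.mp hv
    exact (c m).2.2 v hm
  · rw [eq_top_iff, ← he, Submodule.span_le]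
    rintro _ ⟨n, rfl⟩
    exact Submodule.span_mono (Set.subset_iUnion (fun n => (((c n).1 : Finset V) : Set V)) (n + 1))
      (hespan n)

lemma orth_indep (B : V →ₗ[K] V →ₗ[K] K) (s : Set V)
    (horth : ∀ v ∈ s, ∀ w ∈ s, v ≠ w → B v w = 0) (han : ∀ v ∈ s, B v v ≠ 0) :
    LinearIndependent K ((↑) : s → V) := by
  classical
  rw [linearIndependent_iff']
  intro tt g hsum i hi
  have happ : B (∑ j ∈ tt, g j • (j : V)) (i : V) = 0 := by rw [hsum]; simp
  rw [map_sum, LinearMap.sum_apply] at happ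
  rw [Finset.sum_eq_single i] at happ
  · simp only [map_smul, LinearMap.smul_apply, smul_eq_mul] at happ
    exact (mul_eq_zero.mp happ).resolve_right (han _ i.2)
  · intro j hj hne
    simp only [map_smul, LinearMap.smul_apply, smul_eq_mul]
    rw [horth _ j.2 _ i.2 (Subtype.coe_injective.ne hne), mul_zero]
  · intro h; exact absurd hi h

end Aux

/-- For `char K ≠ 2` and `V` of finite or countably infinite dimension, a nondegenerate
family `{Bᵢ}ᵢ∪{B₀}` with representing maps `Tᵢ` is simultaneously orthogonalizable iff
the family `{Tᵢ}` is simultaneously diagonalizable. -/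
theorem simOrth_iff_simDiag_of_char_ne_two
    {K V I : Type*} [Field K] [AddCommGroup V] [Module K V]
    (hchar : (2 : K) ≠ 0)
    (hrank : Module.rank K V ≤ Cardinal.aleph0)
    (B0 : V →ₗ[K] V →ₗ[K] K) (B : I → V →ₗ[K] V →ₗ[K] K)
    (h0sym : ∀ x y, B0 x y = B0 y x)
    (hisym : ∀ i, ∀ x y, B i x y = B i y x)
    (h0nd : ∀ x : V, (∀ v : V, B0 x v = 0) → x = 0)
    (hpc : ∀ i, ∀ x : V,
      @Continuous V K (weakTopology B0) ⊥ (fun y => B i x y) ∧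
      @Continuous V K (weakTopology B0) ⊥ (fun y => B i y x))
    (T : I → V →ₗ[K] V)
    (hT : ∀ i, ∀ x y, B i x y = B0 (T i x) y) :
    (∃ (s : Set V) (b : Module.Basis s K V), ∀ v w : s, v ≠ w →
        B0 (b v) (b w) = 0 ∧ ∀ i, B i (b v) (b w) = 0) ↔
      (∃ (s : Set V) (b : Module.Basis s K V),
        ∀ i, ∀ v : s, ∃ c : K, T i (b v) = c • b v) := by
  classical
  constructor
  · rintro ⟨s, b, hb⟩
    refine ⟨s, b, ?_⟩
    intro i v
    have hb0 : ∀ y : V, (∀ w : s, B0 y (b w) = 0) → ∀ z : V, B0 y z = 0 := by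
      intro y hy z
      have hker : Submodule.span K (Set.range (b : s → V)) ≤ LinearMap.ker (B0 y) := by
        rw [Submodule.span_le]
        rintro _ ⟨w, rfl⟩
        simp only [SetLike.mem_coe, LinearMap.mem_ker]
        exact hy w
      have hz : z ∈ Submodule.span K (Set.range (b : s → V)) := by rw [b.span_eq]; trivial
      exact hker hz
    have hvv : B0 (b v) (b v) ≠ 0 := by
      intro h0
      apply b.ne_zero v
      apply h0nd
      apply hb0
      intro w
      by_cases hvw : v = w
      · rw [← hvw]; exact h0
      · exact (hb v w hvw).1
    refine ⟨B i (b v) (b v) / B0 (b v) (b v), ?_⟩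
    have hzero : T i (b v) - (B i (b v) (b v) / B0 (b v) (b v)) • b v = 0 := by
      apply h0nd
      apply hb0
      intro w
      rw [map_sub, LinearMap.sub_apply, map_smul, LinearMap.smul_apply, smul_eq_mul,
        ← hT i (b v) (b w)]
      by_cases hvw : v = w
      · subst hvw
        rw [div_mul_cancel₀ _ hvv, sub_self]
      · rw [(hb v w hvw).2 i, (hb v w hvw).1, mul_zero, sub_zero]
    exact sub_eq_zero.mp hzero
  · rintro ⟨s, b, hb⟩
    choose lam hlam using hb
    let f : s → I → K := fun v i => lam i v
    have hcross : ∀ v w : s, f v ≠ f w → B0 (b v) (b w) = 0 := by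
      intro v w hne
      obtain ⟨i, hi⟩ := Function.ne_iff.mp hne
      have h1 : lam i v * B0 (b v) (b w) = lam i w * B0 (b v) (b w) := by
        calc lam i v * B0 (b v) (b w) = B0 (lam i v • b v) (b w) := by
              rw [map_smul, LinearMap.smul_apply, smul_eq_mul]
          _ = B0 (T i (b v)) (b w) := by rw [hlam i v]
          _ = B i (b v) (b w) := (hT i _ _).symm
          _ = B i (b w) (b v) := hisym i _ _
          _ = B0 (T i (b w)) (b v) := hT i _ _
          _ = lam i w * B0 (b w) (b v) := by
              rw [hlam i w, map_smul, LinearMap.smul_apply, smul_eq_mul]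
          _ = lam i w * B0 (b v) (b w) := by rw [h0sym]
      have h2 : (lam i v - lam i w) * B0 (b v) (b w) = 0 := by linear_combination h1
      rcases mul_eq_zero.mp h2 with h | h
      · exact absurd (sub_eq_zero.mp h) hi
      · exact h
    let W : (I → K) → Submodule K V := fun μ =>
      Submodule.span K ((fun v => b v) '' {v : s | f v = μ})
    have hWgen : ∀ v : s, b v ∈ W (f v) := fun v => Submodule.subset_span ⟨v, rfl, rfl⟩
    have hTW : ∀ i (μ : I → K), ∀ x ∈ W μ, T i x = μ i • x := by
      intro i μ x hx
      have hker : W μ ≤ LinearMap.ker (T i - μ i • (LinearMap.id : V →ₗ[K] V)) := by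
        rw [Submodule.span_le]
        rintro _ ⟨v, hv, rfl⟩
        simp only [SetLike.mem_coe, LinearMap.mem_ker, LinearMap.sub_apply,
          LinearMap.smul_apply, LinearMap.id_apply]
        rw [hlam i v, show lam i v = μ i from congrFun hv i, sub_self]
      have hmem := hker hx
      simp only [LinearMap.mem_ker, LinearMap.sub_apply, LinearMap.smul_apply,
        LinearMap.id_apply] at hmem
      exact sub_eq_zero.mp hmem
    have hx1 : ∀ (μ : I → K) (x), x ∈ W μ → ∀ w : s, f w ≠ μ → B0 x (b w) = 0 := by
      intro μ x hx w hw
      have hker : W μ ≤ LinearMap.ker (B0.flip (b w)) := by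
        rw [Submodule.span_le]
        rintro _ ⟨v, hv, rfl⟩
        simp only [SetLike.mem_coe, LinearMap.mem_ker, LinearMap.flip_apply]
        exact hcross v w (by rw [hv]; exact fun h => hw h.symm)
      simpa [LinearMap.flip_apply] using hker hx
    have horthW : ∀ (μ ν : I → K), μ ≠ ν → ∀ x ∈ W μ, ∀ y ∈ W ν, B0 x y = 0 := by
      intro μ ν hne x hx y hy
      have hker : W ν ≤ LinearMap.ker (B0 x) := by
        rw [Submodule.span_le]
        rintro _ ⟨v, hv, rfl⟩
        simp only [SetLike.mem_coe, LinearMap.mem_ker]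
        exact hx1 μ x hx v (by rw [hv]; exact fun h => hne h.symm)
      exact hker hy
    have hndW : ∀ (μ : I → K) (x), x ∈ W μ → (∀ y ∈ W μ, B0 x y = 0) → x = 0 := by
      intro μ x hx h
      apply h0nd
      intro z
      have hall : ∀ w : s, B0 x (b w) = 0 := by
        intro w
        by_cases hw : f w = μ
        · exact h _ (hw ▸ hWgen w)
        · exact hx1 μ x hx w hw
      have hker : Submodule.span K (Set.range (b : s → V)) ≤ LinearMap.ker (B0 x) := by
        rw [Submodule.span_le]
        rintro _ ⟨w, rfl⟩
        simp only [SetLike.mem_coe, LinearMap.mem_ker]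
        exact hall w
      have hz : z ∈ Submodule.span K (Set.range (b : s → V)) := by rw [b.span_eq]; trivial
      exact hker hz
    have hA : ∀ μ : I → K, ∃ sμ : Set (W μ),
        (∀ v ∈ sμ, ∀ w ∈ sμ, v ≠ w → B0 (v : V) (w : V) = 0) ∧
        (∀ v ∈ sμ, B0 (v : V) (v : V) ≠ 0) ∧ Submodule.span K sμ = ⊤ := by
      intro μ
      have hndres : ∀ x : ↥(W μ),
          (∀ y : ↥(W μ), (B0.compl₁₂ (W μ).subtype (W μ).subtype) x y = 0) → x = 0 := by
        intro x hxall
        exact Subtype.ext (hndW μ x x.2 (fun y hy => hxall ⟨y, hy⟩))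
      obtain ⟨sμ, h1, h2, h3⟩ := exists_orth_spanning hchar
        (le_trans (Submodule.rank_le (W μ)) hrank)
        (B0.compl₁₂ (W μ).subtype (W μ).subtype)
        (fun x y => h0sym (x : V) (y : V)) hndres
      exact ⟨sμ, h1, h2, h3⟩
    choose sW hW1 hW2 hW3 using hA
    let S : Set V := ⋃ μ : I → K, (Subtype.val '' sW μ)
    have hmemW : ∀ (μ : I → K) (x : V), x ∈ Subtype.val '' sW μ → x ∈ W μ := by
      rintro μ x ⟨x', _, rfl⟩
      exact x'.2
    have hSan : ∀ x ∈ S, B0 x x ≠ 0 := by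
      intro x hx
      obtain ⟨μ, hμ⟩ := Set.mem_iUnion.mp hx
      obtain ⟨x', hx', rfl⟩ := hμ
      exact hW2 μ x' hx'
    have hSorth : ∀ x ∈ S, ∀ y ∈ S, x ≠ y → B0 x y = 0 := by
      intro x hx y hy hxy
      obtain ⟨μ, hμ⟩ := Set.mem_iUnion.mp hx
      obtain ⟨ν, hν⟩ := Set.mem_iUnion.mp hy
      by_cases hμν : μ = ν
      · subst hμν
        obtain ⟨x', hx', rfl⟩ := hμ
        obtain ⟨y', hy', rfl⟩ := hν
        exact hW1 μ x' hx' y' hy' (fun h => hxy (congrArg Subtype.val h))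
      · exact horthW μ ν hμν x (hmemW μ x hμ) y (hmemW ν y hν)
    have hSBi : ∀ x ∈ S, ∀ y ∈ S, x ≠ y → ∀ i, B i x y = 0 := by
      intro x hx y hy hxy i
      obtain ⟨μ, hμ⟩ := Set.mem_iUnion.mp hx
      rw [hT i, hTW i μ x (hmemW μ x hμ), map_smul, LinearMap.smul_apply, smul_eq_mul,
        hSorth x hx y hy hxy, mul_zero]
    have hWle : ∀ μ : I → K, W μ ≤ Submodule.span K S := by
      intro μ
      have h1 : Submodule.map (W μ).subtype (Submodule.span K (sW μ)) =
          Submodule.span K (Subtype.val '' sW μ) := Submodule.map_span _ _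
      rw [hW3 μ, Submodule.map_subtype_top] at h1
      rw [h1]
      exact Submodule.span_mono (Set.subset_iUnion (fun μ => Subtype.val '' sW μ) μ)
    have hStop : Submodule.span K S = ⊤ := by
      rw [eq_top_iff, ← b.span_eq, Submodule.span_le]
      rintro _ ⟨v, rfl⟩
      exact hWle (f v) (hWgen v)
    have hindep : LinearIndependent K ((↑) : S → V) := orth_indep B0 S hSorth hSan
    have hsp : ⊤ ≤ Submodule.span K (Set.range ((↑) : S → V)) := by
      rw [Subtype.range_coe]
      exact hStop.ge
    refine ⟨S, Module.Basis.mk hindep hsp, ?_⟩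
    intro v w hvw
    have hne : (v : V) ≠ (w : V) := Subtype.coe_injective.ne hvw
    rw [Module.Basis.mk_apply, Module.Basis.mk_apply]
    exact ⟨hSorth _ v.2 _ w.2 hne, fun i => hSBi _ v.2 _ w.2 hne i⟩
end

section
/- For i = 1,2 let (Vᵢ, ⟨·,·⟩ᵢ) be inner product K-vector spaces with radicals rᵢ := rad(⟨·,·⟩ᵢ), and fix subspaces Wᵢ with Vᵢ = rᵢ ⊕ Wᵢ. Let T : V₁ → V₂ be a linear map with T(r₁) ⊆ r₂ and T(W₁) ⊆ W₂, and endow each Vᵢ with its ⟨·,·⟩ᵢ-topology. Then T is continuous if and only if T has an adjoint, i.e., there exists a linear map S : V₂ → V₁ such that ⟨T(x),y⟩₂ = ⟨x,S(y)⟩₁ for all x ∈ V₁ and y ∈ V₂. -/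
lemma weakTopology.continuous_form {K V : Type*} [Field K] [AddCommGroup V] [Module K V]
    (B : V →ₗ[K] V →ₗ[K] K) (v : V) :
    @Continuous V K (weakTopology B) ⊥ (fun x => B v x) :=
  continuous_iInf_dom (i := v) continuous_induced_dom

lemma weakTopology.exists_rep {K V : Type*} [Field K] [AddCommGroup V] [Module K V]
    (B : V →ₗ[K] V →ₗ[K] K) (f : V →ₗ[K] K)
    (hf : @Continuous V K (weakTopology B) ⊥ f) : ∃ u, (f : V →ₗ[K] K) = B u := by
  letI : TopologicalSpace K := ⊥
  haveI : DiscreteTopology K := ⟨rfl⟩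
  letI : TopologicalSpace V := weakTopology B
  have h0 : f ⁻¹' {0} ∈ @nhds V (weakTopology B) 0 := by
    have := hf.continuousAt (x := (0 : V))
    apply this
    rw [f.map_zero]
    exact (isOpen_discrete ({0} : Set K)).mem_nhds rfl
  have heq : @nhds V (weakTopology B) 0 = ⨅ v : V, Filter.comap (fun x => B v x) (pure 0) := by
    rw [show weakTopology B = ⨅ v : V, TopologicalSpace.induced (fun x => B v x)
        (⊥ : TopologicalSpace K) from rfl, nhds_iInf]
    congr 1
    ext v
    rw [nhds_induced]
    simp [nhds_discrete]
  rw [heq, Filter.mem_iInf] at h0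
  obtain ⟨I, hIfin, Vs, hVs, hU⟩ := h0
  haveI : Finite I := hIfin.to_subtype
  have hker : ⨅ i : I, LinearMap.ker (B (i : V)) ≤ LinearMap.ker f := by
    intro x hx
    simp only [Submodule.mem_iInf, LinearMap.mem_ker] at hx ⊢
    have hxU : x ∈ f ⁻¹' {0} := by
      rw [hU]
      refine Set.mem_iInter.2 fun i => ?_
      obtain ⟨t, ht, hsub⟩ := (Filter.mem_comap).1 (hVs i)
      exact hsub (by simpa [hx i] using Filter.mem_pure.1 ht)
    simpa using hxU
  have hspan : f ∈ Submodule.span K (Set.range fun i : I => B (i : V)) :=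
    mem_span_of_iInf_ker_le_ker hker
  have hle : Submodule.span K (Set.range fun i : I => B (i : V)) ≤ LinearMap.range B := by
    rw [Submodule.span_le]
    rintro _ ⟨i, rfl⟩
    exact ⟨i, rfl⟩
  obtain ⟨u, hu⟩ := hle hspan
  exact ⟨u, hu.symm⟩

/-- Let `(Vᵢ, Bᵢ)` (`i = 1, 2`) be inner product spaces with radicals `rᵢ = ker Bᵢ`,
`Vᵢ = rᵢ ⊕ Wᵢ`, and let `T : V₁ → V₂` be linear with `T r₁ ⊆ r₂` and `T W₁ ⊆ W₂`.
Then `T` is continuous (for the form topologies) iff `T` has an adjoint. -/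
theorem continuous_iff_hasAdjoint
    {K V₁ V₂ : Type*} [Field K]
    [AddCommGroup V₁] [Module K V₁] [AddCommGroup V₂] [Module K V₂]
    (B1 : V₁ →ₗ[K] V₁ →ₗ[K] K) (B2 : V₂ →ₗ[K] V₂ →ₗ[K] K)
    (h1sym : ∀ x y, B1 x y = B1 y x)
    (h2sym : ∀ x y, B2 x y = B2 y x)
    (W1 : Submodule K V₁) (W2 : Submodule K V₂)
    (hW1 : IsCompl (LinearMap.ker B1) W1)
    (hW2 : IsCompl (LinearMap.ker B2) W2)
    (T : V₁ →ₗ[K] V₂)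
    (hTr : ∀ x ∈ LinearMap.ker B1, T x ∈ LinearMap.ker B2)
    (hTW : ∀ x ∈ W1, T x ∈ W2) :
    @Continuous V₁ V₂ (weakTopology B1) (weakTopology B2) T ↔
      ∃ S : V₂ →ₗ[K] V₁, ∀ (x : V₁) (y : V₂), B2 (T x) y = B1 x (S y) := by
  constructor
  · intro hT
    -- for each w, a unique u ∈ W1 with B1 u = B2 w ∘ T
    have key : ∀ w : V₂, ∃! u : V₁, u ∈ W1 ∧ (B2 w).comp T = B1 u := by
      intro w
      have hcont : @Continuous V₁ K (weakTopology B1) ⊥ ((B2 w).comp T) :=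
        @Continuous.comp V₁ V₂ K (weakTopology B1) (weakTopology B2) ⊥ _ _
          (weakTopology.continuous_form B2 w) hT
      obtain ⟨u, hu⟩ := weakTopology.exists_rep B1 _ hcont
      -- decompose u
      obtain ⟨k, hk, u', hu', hsum⟩ : ∃ k ∈ LinearMap.ker B1, ∃ u' ∈ W1, k + u' = u := by
        have := Submodule.mem_sup.1 ((hW1.sup_eq_top ▸ Submodule.mem_top : u ∈ _))
        exact this
      refine ⟨u', ⟨hu', ?_⟩, ?_⟩
      · rw [hu, ← hsum, map_add, LinearMap.mem_ker.1 hk, zero_add]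
      · rintro y ⟨hyW, hy⟩
        have : y - u' ∈ LinearMap.ker B1 ⊓ W1 := by
          constructor
          · have : B1 y = B1 u' := by
              rw [← hy, hu, ← hsum, map_add, LinearMap.mem_ker.1 hk, zero_add]
            simp [LinearMap.mem_ker, map_sub, this]
          · exact W1.sub_mem hyW hu'
        rw [hW1.inf_eq_bot] at this
        exact sub_eq_zero.1 (Submodule.mem_bot K |>.1 this)
    have hS0W : ∀ w, (key w).choose ∈ W1 := fun w => (key w).choose_spec.1.1
    have hS0 : ∀ w, (B2 w).comp T = B1 ((key w).choose) := fun w => (key w).choose_spec.1.2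
    have huniq : ∀ w y, y ∈ W1 → (B2 w).comp T = B1 y → y = (key w).choose :=
      fun w y h1 h2 => (key w).choose_spec.2 y ⟨h1, h2⟩
    refine ⟨⟨⟨fun w => (key w).choose, ?_⟩, ?_⟩, ?_⟩
    · intro w w'
      refine (huniq (w + w') _ (W1.add_mem (hS0W w) (hS0W w')) ?_).symm
      rw [map_add, LinearMap.add_comp, map_add]
      exact congrArg₂ (· + ·) (hS0 w) (hS0 w')
    · intro c w
      refine (huniq (c • w) _ (W1.smul_mem c (hS0W w)) ?_).symm
      rw [map_smul, LinearMap.smul_comp, map_smul]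
      exact congrArg (c • ·) (hS0 w)
    · intro x y
      have := congrFun (congrArg DFunLike.coe (hS0 y)) x
      simp only [LinearMap.comp_apply] at this
      rw [h2sym (T x) y, this, h1sym]
      rfl
  · rintro ⟨S, hS⟩
    rw [show weakTopology B2 = ⨅ v : V₂, TopologicalSpace.induced (fun x => B2 v x)
        (⊥ : TopologicalSpace K) from rfl]
    refine continuous_iInf_rng.2 fun w => continuous_induced_rng.2 ?_
    have heq : ((fun x => B2 w x) ∘ ⇑T) = fun x => B1 (S w) x := by
      funext x
      show B2 w (T x) = B1 (S w) x
      rw [h2sym w (T x), hS x w, h1sym x (S w)]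
    rw [heq]
    exact weakTopology.continuous_form B1 (S w)
end

section
/- Let F = {⟨·,·⟩ᵢ}_{i∈I∪{0}} be a family of inner products on a K-vector space V such that r₀ := rad(⟨·,·⟩₀) ⊆ rad(⟨·,·⟩ᵢ) for all i ∈ I, and each ⟨·,·⟩ᵢ is partially continuous relative to the ⟨·,·⟩₀-topology of V. Then F is simultaneously orthogonalizable if and only if there exist a basis B of V orthogonal relative to ⟨·,·⟩₀ and, for every i ∈ I ∪ {0}, a continuous linear map Tᵢ : V → V which is self-adjoint relative to ⟨·,·⟩₀, vanishes on r₀, satisfies ⟨x,y⟩ᵢ = ⟨Tᵢ(x),y⟩₀ for all x,y ∈ V, and is diagonalized by B (Tᵢ(v) ∈ K·v for every v ∈ B). -/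
/-- Let `F = {Bᵢ}_{i ∈ I ∪ {0}}` be a family of inner products on `V` with
`rad B₀ ⊆ rad Bᵢ` for all `i ∈ I`, each `Bᵢ` partially continuous for the
`B₀`-topology.  Then `F` is simultaneously orthogonalizable iff there exist a basis of
`V` orthogonal for `B₀` and, for every index in `I ∪ {0}` (encoded as `Option I`, with
`none` standing for `0`), a continuous `B₀`-self-adjoint linear map `Tᵢ` vanishing on
`rad B₀`, representing `Bᵢ` via `B₀`, and diagonalized by the basis. -/
theorem simOrth_iff_representing_maps_degenerate
    {K V I : Type*} [Field K] [AddCommGroup V] [Module K V]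
    (B0 : V →ₗ[K] V →ₗ[K] K) (B : I → V →ₗ[K] V →ₗ[K] K)
    (h0sym : ∀ x y, B0 x y = B0 y x)
    (hisym : ∀ i, ∀ x y, B i x y = B i y x)
    (hrad : ∀ i, LinearMap.ker B0 ≤ LinearMap.ker (B i))
    (hpc : ∀ i, ∀ x : V,
      @Continuous V K (weakTopology B0) ⊥ (fun y => B i x y) ∧
      @Continuous V K (weakTopology B0) ⊥ (fun y => B i y x)) :
    (∃ (s : Set V) (b : Module.Basis s K V), ∀ v w : s, v ≠ w →
        B0 (b v) (b w) = 0 ∧ ∀ i, B i (b v) (b w) = 0) ↔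
      (∃ (s : Set V) (b : Module.Basis s K V) (T : Option I → V →ₗ[K] V),
        (∀ v w : s, v ≠ w → B0 (b v) (b w) = 0) ∧
        ∀ o : Option I,
          @Continuous V V (weakTopology B0) (weakTopology B0) (T o) ∧
          (∀ x y, B0 (T o x) y = B0 x (T o y)) ∧
          (∀ x ∈ LinearMap.ker B0, T o x = 0) ∧
          (∀ x y, o.elim (B0 x y) (fun i => B i x y) = B0 (T o x) y) ∧
          (∀ v : s, ∃ c : K, T o (b v) = c • b v)) := by
  classical
  constructor
  · rintro ⟨s, b, hb⟩
    set Bo : Option I → V →ₗ[K] V →ₗ[K] K := fun o => o.elim B0 B with hBodef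
    have hBo : ∀ o x y, Bo o x y = o.elim (B0 x y) (fun i => B i x y) := by
      rintro (_ | i) x y <;> rfl
    have hsym : ∀ o x y, Bo o x y = Bo o y x := by
      rintro (_ | i) x y
      · exact h0sym x y
      · exact hisym i x y
    have hrad' : ∀ o, LinearMap.ker B0 ≤ LinearMap.ker (Bo o) := by
      rintro (_ | i)
      · exact le_rfl
      · exact hrad i
    have horth : ∀ o, ∀ v w : s, v ≠ w → Bo o (b v) (b w) = 0 := by
      rintro (_ | i) v w hvw
      · exact (hb v w hvw).1
      · exact (hb v w hvw).2 i
    -- a basis vector with zero "norm" lies in the radical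
    have hradv : ∀ v : s, B0 (b v) (b v) = 0 → B0 (b v) = 0 := by
      intro v hv
      apply b.ext
      intro w
      by_cases hvw : v = w
      · subst hvw; simpa using hv
      · simpa using (hb v w hvw).1
    -- define the representing maps
    set f : Option I → s → V := fun o v =>
      if B0 (b v) (b v) = 0 then 0
      else (Bo o (b v) (b v) / B0 (b v) (b v)) • b v with hfdef
    set T : Option I → V →ₗ[K] V := fun o => b.constr K (f o) with hTdef
    -- the key representation identity on basis vectors
    have keyb : ∀ o (v w : s), Bo o (b v) (b w) = B0 (T o (b v)) (b w) := by
      intro o v w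
      have hTb : T o (b v) = f o v := by simp [hTdef]
      rw [hTb]
      by_cases hv : B0 (b v) (b v) = 0
      · have h1 : Bo o (b v) = 0 :=
          hrad' o (LinearMap.mem_ker.2 (hradv v hv))
        simp [hfdef, hv, h1]
      · simp only [hfdef, hv, if_false, map_smul, LinearMap.smul_apply,
          smul_eq_mul]
        by_cases hvw : v = w
        · subst hvw
          field_simp
        · rw [horth o v w hvw, (hb v w hvw).1, mul_zero]
    have key : ∀ o x y, Bo o x y = B0 (T o x) y := by
      intro o x y
      have : Bo o = B0.comp (T o) := by
        apply b.ext; intro v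
        apply b.ext; intro w
        simpa using keyb o v w
      rw [this]; rfl
    -- self-adjointness
    have hsa : ∀ o x y, B0 (T o x) y = B0 x (T o y) := by
      intro o x y
      rw [← key o x y, hsym o x y, key o y x, h0sym]
    -- coordinate formula
    have hcoord : ∀ (x : V) (v : s),
        B0 (b v) x = b.repr x v * B0 (b v) (b v) := by
      intro x v
      conv_lhs => rw [← b.linearCombination_repr x, Finsupp.linearCombination_apply]
      rw [map_finsuppSum]
      refine (Finsupp.sum_eq_single v ?_ ?_).trans (by simp)
      · intro w _ hwv
        rw [map_smul, smul_eq_mul, (hb v w (fun h => hwv h.symm)).1, mul_zero]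
      · intro _; simp
    -- vanishing on the radical
    have hvan : ∀ o, ∀ x ∈ LinearMap.ker B0, T o x = 0 := by
      intro o x hx
      have hx0 : B0 x = 0 := LinearMap.mem_ker.1 hx
      rw [hTdef]
      simp only
      rw [Module.Basis.constr_apply]
      rw [Finsupp.sum]
      apply Finset.sum_eq_zero
      intro v _
      by_cases hv : B0 (b v) (b v) = 0
      · simp [hfdef, hv]
      · have h1 : B0 (b v) x = 0 := by
          rw [h0sym, hx0]; rfl
        have h2 : b.repr x v = 0 := by
          have := hcoord x v
          rw [h1] at this
          exact (mul_eq_zero.1 this.symm).resolve_right hv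
        rw [h2, zero_smul]
    -- continuity
    have hcont : ∀ o,
        @Continuous V V (weakTopology B0) (weakTopology B0) (T o) := by
      intro o
      rw [weakTopology, continuous_iInf_rng]
      intro v
      rw [continuous_induced_rng]
      have : (fun x => B0 v (T o x)) = fun x => B0 (T o v) x := by
        funext x; rw [← hsa o v x]
      show @Continuous V K (weakTopology B0) ⊥ (fun x => B0 v (T o x))
      rw [this, weakTopology]
      exact continuous_iInf_dom continuous_induced_dom
    refine ⟨s, b, T, fun v w hvw => (hb v w hvw).1, fun o => ⟨hcont o,
      hsa o, hvan o, ?_, ?_⟩⟩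
    · intro x y
      rw [← key o x y, hBo]
    · intro v
      have hTb : T o (b v) = f o v := by simp [hTdef]
      by_cases hv : B0 (b v) (b v) = 0
      · exact ⟨0, by rw [hTb]; simp [hfdef, hv]⟩
      · exact ⟨Bo o (b v) (b v) / B0 (b v) (b v), by
          rw [hTb]; simp [hfdef, hv]⟩
  · rintro ⟨s, b, T, hb0, hT⟩
    refine ⟨s, b, fun v w hvw => ⟨hb0 v w hvw, fun i => ?_⟩⟩
    obtain ⟨_, _, _, hrep, hdiag⟩ := hT (some i)
    obtain ⟨c, hc⟩ := hdiag v
    have := hrep (b v) (b w)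
    simp only [Option.elim] at this
    rw [this, hc]
    simp [hb0 v w hvw]
end

section
/- Let V be a finite-dimensional vector space over a field K, let J be an index set with card(K) > card(J), and let {l_i}_{i∈J} be a family of proper subspaces of V. Then V is not contained in the union ⋃_{i∈J} l_i; that is, there exists v ∈ V with v ∉ l_i for every i ∈ J. -/
universe u v w

/-- A finite-dimensional vector space over `K` is not the union of a family of proper
subspaces indexed by a set `J` with `card J < card K`. -/
theorem not_subset_iUnion_of_proper_subspaces
    {K : Type u} {V : Type v} {J : Type w}
    [Field K] [AddCommGroup V] [Module K V] [FiniteDimensional K V]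
    (l : J → Submodule K V)
    (hproper : ∀ i, l i ≠ ⊤)
    (hcard : Cardinal.lift.{u} (Cardinal.mk J) < Cardinal.lift.{w} (Cardinal.mk K)) :
    ∃ v : V, ∀ i, v ∉ l i := by
  classical
  by_contra hc
  push_neg at hc
  -- every vector lies in some `l i`
  have h : ∀ v : V, ∃ i, v ∈ l i := hc
  -- no map `K → J` is injective
  have hninj : ∀ f : K → J, ¬ Function.Injective f := by
    intro f hf
    exact hcard.not_ge (Cardinal.lift_mk_le'.mpr ⟨⟨f, hf⟩⟩)
  -- key: every finset of vectors is contained in a single `l i`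
  have key : ∀ n : ℕ, ∀ s : Finset V, s.card ≤ n → ∃ i, ∀ x ∈ s, x ∈ l i := by
    intro n
    induction n with
    | zero =>
      intro s hs
      obtain ⟨i, _⟩ := h 0
      refine ⟨i, fun x hx => ?_⟩
      simp [Finset.card_eq_zero.mp (Nat.le_zero.mp hs)] at hx
    | succ n ih =>
      intro s hs
      rcases le_or_gt s.card n with h' | h'
      · exact ih s h'
      have hcardeq : s.card = n + 1 := le_antisymm hs h'
      have hne : s.Nonempty := Finset.card_pos.mp (by omega)
      obtain ⟨w, hw⟩ := hne
      set s' := s.erase w with hs'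
      rcases s'.eq_empty_or_nonempty with he | ⟨u, hu⟩
      · obtain ⟨i, hi⟩ := h w
        refine ⟨i, fun x hx => ?_⟩
        rcases Finset.mem_insert.mp ((Finset.insert_erase hw) ▸ hx) with rfl | hx'
        · exact hi
        · simp [← hs', he] at hx'
      · -- for each `t : K`, the set `insert (u + t • w) (s'.erase u)` has card ≤ n
        have hcard' : ∀ t : K, (insert (u + t • w) (s'.erase u)).card ≤ n := by
          intro t
          have h1 : s'.card = n := by
            rw [hs', Finset.card_erase_of_mem hw, hcardeq]
            omega
          have h2 : (s'.erase u).card = n - 1 := by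
            rw [Finset.card_erase_of_mem hu, h1]
          calc (insert (u + t • w) (s'.erase u)).card ≤ (s'.erase u).card + 1 :=
                Finset.card_insert_le _ _
            _ ≤ n := by
                have : 1 ≤ n := by
                  by_contra hn
                  interval_cases n
                  simp [Finset.card_eq_zero.mp h1] at hu
                omega
        -- choose an index for each `t`
        choose f hf using fun t : K => ih _ (hcard' t)
        obtain ⟨t, t', hftt', htt'⟩ := Function.not_injective_iff.mp (hninj f)
        set i := f t with hi
        have h1 : u + t • w ∈ l i := hf t _ (Finset.mem_insert_self _ _)
        have h2 : u + t' • w ∈ l i := by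
          have := hf t' _ (Finset.mem_insert_self (u + t' • w) (s'.erase u))
          rwa [← hftt'] at this
        have hsub : (t - t') • w ∈ l i := by
          have := (l i).sub_mem h1 h2
          simpa [sub_smul, add_sub_add_left_eq_sub] using this
        have hwmem : w ∈ l i :=
          ((l i).smul_mem_iff (sub_ne_zero.mpr htt')).mp hsub
        have humem : u ∈ l i := by
          have := (l i).sub_mem h1 ((l i).smul_mem t hwmem)
          simpa using this
        refine ⟨i, fun x hx => ?_⟩
        rcases eq_or_ne x w with rfl | hxw
        · exact hwmem
        have hx' : x ∈ s' := Finset.mem_erase.mpr ⟨hxw, hx⟩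
        rcases eq_or_ne x u with rfl | hxu
        · exact humem
        exact hf t _ (Finset.mem_insert_of_mem (Finset.mem_erase.mpr ⟨hxu, hx'⟩))
  -- take a spanning finset
  obtain ⟨s, hspan⟩ := Module.Finite.fg_top (R := K) (M := V)
  obtain ⟨i, hi⟩ := key s.card s le_rfl
  apply hproper i
  rw [eq_top_iff, ← hspan]
  exact Submodule.span_le.mpr fun x hx => hi x hx
end

section
/- Let K be a field, n ≥ 1 a natural number, and J an index set with card(K) > card(J). For each i ∈ J let (a_{1i},…,a_{ni}) ∈ Kⁿ be a nonzero tuple. Then there exist x₁,…,xₙ ∈ K such that x₁·a_{1i} + ⋯ + xₙ·a_{ni} ≠ 0 for every i ∈ J. -/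
universe u w

theorem aux_exists_tuple (n : ℕ) : ∀ {K : Type u} {J : Type w} [Field K],
    Cardinal.lift.{u} (Cardinal.mk J) < Cardinal.lift.{w} (Cardinal.mk K) →
    ∀ (a : J → Fin n → K), (∀ i, a i ≠ 0) →
    ∃ x : Fin n → K, ∀ i, ∑ j, x j * a i j ≠ 0 := by
  induction n with
  | zero =>
    intro K J _ hcard a ha
    exact ⟨0, fun i => absurd (funext fun j => j.elim0) (ha i)⟩
  | succ n ih =>
    intro K J _ hcard a ha
    classical
    set J0 := {i : J // a i (Fin.last n) = 0} with hJ0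
    have hcard0 : Cardinal.lift.{u} (Cardinal.mk J0) < Cardinal.lift.{w} (Cardinal.mk K) :=
      lt_of_le_of_lt (Cardinal.lift_le.mpr (Cardinal.mk_subtype_le _)) hcard
    have hb : ∀ i : J0, Fin.init (a i.1) ≠ 0 := by
      rintro ⟨i, hi⟩ h
      apply ha i
      funext j
      rcases Fin.eq_castSucc_or_eq_last j with ⟨k, rfl⟩ | rfl
      · exact congrFun h k
      · exact hi
    obtain ⟨y, hy⟩ := ih hcard0 (fun i : J0 => Fin.init (a i.1)) hb
    -- choose t avoiding bad values
    let f : J → K := fun i =>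
      if a i (Fin.last n) = 0 then 0
      else -(∑ j : Fin n, y j * a i j.castSucc) / a i (Fin.last n)
    have : ∃ t : K, ∀ i, f i ≠ t := by
      by_contra h
      push_neg at h
      have hsurj : Function.Surjective f := fun t => h t
      have : Cardinal.lift.{w} (Cardinal.mk K) ≤ Cardinal.lift.{u} (Cardinal.mk J) :=
        Cardinal.lift_mk_le'.mpr ⟨⟨Function.surjInv hsurj, Function.injective_surjInv hsurj⟩⟩
      exact absurd hcard this.not_gt
    obtain ⟨t, ht⟩ := this
    refine ⟨Fin.snoc y t, fun i => ?_⟩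
    rw [Fin.sum_univ_castSucc]
    simp only [Fin.snoc_castSucc, Fin.snoc_last]
    by_cases hi : a i (Fin.last n) = 0
    · rw [hi, mul_zero, add_zero]
      have := hy ⟨i, hi⟩
      simpa [Fin.init] using this
    · intro h
      apply ht i
      have : t = -(∑ j : Fin n, y j * a i j.castSucc) / a i (Fin.last n) := by
        rw [eq_div_iff hi]
        linear_combination h
      simp [f, hi, this]

/-- If `card J < card K` and for each `i ∈ J` we are given a nonzero tuple
`(a_{1i}, …, a_{ni}) ∈ Kⁿ` (`n ≥ 1`), then there are `x₁, …, xₙ ∈ K` with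
`x₁ a_{1i} + ⋯ + xₙ a_{ni} ≠ 0` for every `i ∈ J`. -/
theorem exists_tuple_forall_linearCombination_ne_zero
    {K : Type u} {J : Type w} [Field K] {n : ℕ} (hn : 1 ≤ n)
    (a : J → Fin n → K)
    (ha : ∀ i, a i ≠ 0)
    (hcard : Cardinal.lift.{u} (Cardinal.mk J) < Cardinal.lift.{w} (Cardinal.mk K)) :
    ∃ x : Fin n → K, ∀ i, ∑ j, x j * a i j ≠ 0 :=
  aux_exists_tuple n hcard a ha
end

section
/- Let V be a K-vector space and F = {⟨·,·⟩ᵢ}_{i∈I} a simultaneously orthogonalizable family of inner products on V satisfying the descending chain condition on radicals. Then there is a finite subset F₀ ⊆ I such that ⋂_{i∈F₀} rad(⟨·,·⟩ᵢ) = ⋂_{i∈I} rad(⟨·,·⟩ᵢ). Furthermore, if ⋂_{i∈I} rad(⟨·,·⟩ᵢ) = 0 and card(K) > dim(V), then there exist finitely many indices i₁,…,iₙ ∈ I and scalars x₁,…,xₙ ∈ K such that the inner product x₁⟨·,·⟩_{i₁} + ⋯ + xₙ⟨·,·⟩_{iₙ} is nondegenerate. -/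
universe u v w

open Cardinal in
lemma exists_good_coeffs {K : Type u} {S : Type v} [Field K]
    (hcard : Cardinal.lift.{u} (Cardinal.mk S) < Cardinal.lift.{v} (Cardinal.mk K)) :
    ∀ (n : ℕ) (d : S → Fin n → K), ∃ x : Fin n → K,
      ∀ w, (∃ j, d w j ≠ 0) → ∑ j, x j * d w j ≠ 0 := by
  intro n
  induction n with
  | zero => exact fun d => ⟨0, fun w hw => absurd hw (by rintro ⟨j, -⟩; exact j.elim0)⟩
  | succ n ih =>
    intro d
    obtain ⟨x', hx'⟩ := ih (fun w j => d w j.castSucc)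
    set f : S → K := fun w =>
      -(∑ j : Fin n, x' j * d w j.castSucc) / d w (Fin.last n) with hf
    have hrange : Set.range f ≠ Set.univ := by
      intro h
      have h1 : Cardinal.lift.{v} (Cardinal.mk (Set.range f)) ≤
          Cardinal.lift.{u} (Cardinal.mk S) := Cardinal.mk_range_le_lift
      rw [h] at h1
      rw [Cardinal.mk_univ] at h1
      exact absurd (h1.trans_lt hcard) (lt_irrefl _)
    obtain ⟨t, ht⟩ : ∃ t : K, t ∉ Set.range f := by
      by_contra h
      push_neg at h
      exact hrange (Set.eq_univ_of_forall h)
    refine ⟨(Fin.snoc x' t : Fin (n+1) → K), fun w hw => ?_⟩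
    have hsum : ∑ j, (Fin.snoc x' t : Fin (n+1) → K) j * d w j =
        (∑ j : Fin n, x' j * d w j.castSucc) + t * d w (Fin.last n) := by
      rw [Fin.sum_univ_castSucc]
      simp [Fin.snoc_castSucc, Fin.snoc_last]
    rw [hsum]
    by_cases hlast : d w (Fin.last n) = 0
    · rw [hlast, mul_zero, add_zero]
      apply hx'
      obtain ⟨j, hj⟩ := hw
      rcases eq_or_ne j (Fin.last n) with rfl | hne
      · exact absurd hlast hj
      · exact ⟨j.castPred hne, by simpa using hj⟩
    · intro hcontra
      apply ht
      refine ⟨w, ?_⟩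
      rw [hf]
      rw [div_eq_iff hlast]
      exact (eq_neg_of_add_eq_zero_right hcontra).symm

lemma exists_finset_radical_eq
    {K : Type u} {V : Type v} {I : Type w}
    [Field K] [AddCommGroup V] [Module K V]
    (B : I → V →ₗ[K] V →ₗ[K] K)
    (hdcc : ∀ f : ℕ → Finset I,
      (∀ n, (⨅ i ∈ f (n + 1), LinearMap.ker (B i)) ≤ ⨅ i ∈ f n, LinearMap.ker (B i)) →
      ∃ n, ∀ m, n ≤ m →
        (⨅ i ∈ f m, LinearMap.ker (B i)) = ⨅ i ∈ f n, LinearMap.ker (B i)) :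
    ∃ F₀ : Finset I,
        (⨅ i ∈ F₀, LinearMap.ker (B i)) = ⨅ i, LinearMap.ker (B i) := by
  classical
  by_contra hcon
  push_neg at hcon
  have key : ∀ F : Finset I, ∃ i : I,
      ¬ (⨅ i ∈ F, LinearMap.ker (B i)) ≤ LinearMap.ker (B i) := by
    intro F
    have hle : (⨅ i, LinearMap.ker (B i)) ≤ ⨅ i ∈ F, LinearMap.ker (B i) :=
      le_iInf₂ fun i _ => iInf_le _ i
    have hne := hcon F
    by_contra h
    push_neg at h
    exact hne (le_antisymm (le_iInf fun i => h i) hle)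
  choose c hc using key
  set g : ℕ → Finset I := fun n => Nat.rec (∅ : Finset I) (fun _ F => insert (c F) F) n
    with hg
  have hmono : ∀ n, g n ⊆ g (n + 1) := fun n => Finset.subset_insert _ _
  have hdec : ∀ n, (⨅ i ∈ g (n + 1), LinearMap.ker (B i)) ≤
      ⨅ i ∈ g n, LinearMap.ker (B i) :=
    fun n => le_iInf₂ fun i hi => iInf₂_le i (hmono n hi)
  obtain ⟨n, hn⟩ := hdcc g hdec
  have heq := hn (n + 1) (Nat.le_succ n)
  apply hc (g n)
  rw [← heq]
  exact iInf₂_le (c (g n)) (Finset.mem_insert_self _ _)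

/-- Let `F = {Bᵢ}` be a simultaneously orthogonalizable family of inner products on `V`
satisfying the descending chain condition on radicals.  Then some finite subfamily has
intersection of radicals equal to the radical `⨅ i, ker Bᵢ` of the family; furthermore,
if the radical of the family is trivial and `card K > dim V`, then some finite linear
combination of members of the family is nondegenerate. -/
theorem exists_finset_radical_eq_and_nondegenerate_combination
    {K : Type u} {V : Type v} {I : Type w}
    [Field K] [AddCommGroup V] [Module K V]
    (B : I → V →ₗ[K] V →ₗ[K] K)
    (hsym : ∀ i, ∀ x y, B i x y = B i y x)
    (horth : ∃ (s : Set V) (b : Module.Basis s K V), ∀ v w : s, v ≠ w →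
        ∀ i, B i (b v) (b w) = 0)
    (hdcc : ∀ f : ℕ → Finset I,
      (∀ n, (⨅ i ∈ f (n + 1), LinearMap.ker (B i)) ≤ ⨅ i ∈ f n, LinearMap.ker (B i)) →
      ∃ n, ∀ m, n ≤ m →
        (⨅ i ∈ f m, LinearMap.ker (B i)) = ⨅ i ∈ f n, LinearMap.ker (B i)) :
    (∃ F₀ : Finset I,
        (⨅ i ∈ F₀, LinearMap.ker (B i)) = ⨅ i, LinearMap.ker (B i)) ∧
    ((⨅ i, LinearMap.ker (B i)) = ⊥ →
      Cardinal.lift.{u} (Module.rank K V) < Cardinal.lift.{v} (Cardinal.mk K) →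
      ∃ (n : ℕ) (idx : Fin n → I) (x : Fin n → K),
        LinearMap.ker (∑ j, x j • B (idx j)) = ⊥) := by
  obtain ⟨F₀, hF₀⟩ := exists_finset_radical_eq B hdcc
  refine ⟨⟨F₀, hF₀⟩, fun hrad hcard => ?_⟩
  obtain ⟨s, b, horth⟩ := horth
  -- the radical of the finite subfamily is trivial
  have hF₀bot : (⨅ i ∈ F₀, LinearMap.ker (B i)) = ⊥ := hF₀.trans hrad
  -- enumerate F₀
  set n := F₀.card with hn
  set idx : Fin n → I := fun j => ((F₀.equivFin.symm j : F₀) : I) with hidx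
  have hidxmem : ∀ j, idx j ∈ F₀ := fun j => (F₀.equivFin.symm j).2
  have hidxsurj : ∀ i ∈ F₀, ∃ j, idx j = i := by
    intro i hi
    exact ⟨F₀.equivFin ⟨i, hi⟩, by simp [hidx]⟩
  -- diagonal entries
  set d : s → Fin n → K := fun w j => B (idx j) (b w) (b w) with hd
  -- each basis vector has some nonzero diagonal entry
  have hdiag : ∀ w : s, ∃ j, d w j ≠ 0 := by
    intro w
    have hbw : (b w : V) ≠ 0 := b.ne_zero w
    have hnotmem : (b w : V) ∉ (⨅ i ∈ F₀, LinearMap.ker (B i)) := by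
      rw [hF₀bot]; exact fun h => hbw (Submodule.mem_bot K |>.mp h)
    obtain ⟨i, hi, hiker⟩ : ∃ i ∈ F₀, (b w : V) ∉ LinearMap.ker (B i) := by
      by_contra h
      push_neg at h
      exact hnotmem ((Submodule.mem_iInf _).mpr fun i =>
        (Submodule.mem_iInf _).mpr fun hi => h i hi)
    obtain ⟨j, rfl⟩ := hidxsurj i hi
    refine ⟨j, fun h0 => hiker ?_⟩
    rw [LinearMap.mem_ker]
    apply b.ext
    intro u
    rcases eq_or_ne u w with rfl | hne
    · exact h0
    · exact horth w u (Ne.symm hne) _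
  -- cardinality of the basis
  have hcard' : Cardinal.lift.{u} (Cardinal.mk s) < Cardinal.lift.{v} (Cardinal.mk K) := by
    rwa [b.mk_eq_rank'']  -- mk s = Module.rank K V
  obtain ⟨x, hx⟩ := exists_good_coeffs hcard' n d
  refine ⟨n, idx, x, ?_⟩
  set C : V →ₗ[K] V →ₗ[K] K := ∑ j, x j • B (idx j) with hC
  have hCapp : ∀ u v : V, C u v = ∑ j, x j * B (idx j) u v := by
    intro u v
    rw [hC]
    simp [LinearMap.sum_apply, LinearMap.smul_apply, smul_eq_mul]
  have hCorth : ∀ u w : s, u ≠ w → C (b u) (b w) = 0 := by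
    intro u w huw
    rw [hCapp]
    exact Finset.sum_eq_zero fun j _ => by rw [horth u w huw, mul_zero]
  have hCdiag : ∀ w : s, C (b w) (b w) ≠ 0 := by
    intro w
    rw [hCapp]
    exact hx w (hdiag w)
  rw [LinearMap.ker_eq_bot']
  intro v hv
  have hrepr : ∀ w : s, b.repr v w = 0 := by
    intro w
    have h1 : C v (b w) = 0 := by rw [hv]; rfl
    have h2 : C v (b w) = b.repr v w * C (b w) (b w) := by
      conv_lhs => rw [← b.linearCombination_repr v]
      rw [Finsupp.linearCombination_apply, Finsupp.sum, map_sum]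
      rw [LinearMap.sum_apply]
      simp only [map_smul, LinearMap.smul_apply, smul_eq_mul]
      by_cases hw : w ∈ (b.repr v).support
      · rw [Finset.sum_eq_single_of_mem w hw]
        intro u hu hne
        rw [hCorth u w hne, mul_zero]
      · rw [Finsupp.notMem_support_iff.mp hw, zero_mul]
        exact Finset.sum_eq_zero fun u hu => by
          rw [hCorth u w (fun h => hw (h ▸ hu)), mul_zero]
    rw [h1] at h2
    rcases mul_eq_zero.mp h2.symm with h | h
    · exact h
    · exact absurd h (hCdiag w)
  have : b.repr v = 0 := Finsupp.ext hrepr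
  have := congrArg b.repr.symm this
  rwa [b.repr.symm_apply_apply, map_zero] at this
end

section
/- Let {⟨·,·⟩ᵢ}_{i∈I} be a family of inner products on a K-vector space V, with I a directed preordered set, 𝔘 an ultrafilter on I containing every up-set [i,→), F* := (∏_{i∈I} K)/𝔘 the ultraproduct field, and ⟪x,y⟫ := [(⟨x,y⟩ᵢ)_{i∈I}] ∈ F*. Then: (1) an element x ∈ V is pathological if and only if ⟪x,y⟫ = 0 for all y ∈ V; and (2) if the family is nonpathological and simultaneously orthogonalizable, then for any basis {v_j} of V orthogonalizing the family simultaneously, ⟪v_j, v_j⟫ ≠ 0 for every j (so that {v_j ⊗ 1} is an orthogonal basis with nonzero diagonal values for the extension of ⟪·,·⟫ to V ⊗_K F*, which is therefore nondegenerate). -/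
open Filter

/-- Ultrafilter construction: for a family `{Bᵢ}` of inner products indexed by a directed
preorder `I` and an ultrafilter `𝔘` containing all up-sets, with
`⟪x,y⟫ := [(Bᵢ x y)] ∈ F* = (∏ K)/𝔘` (the germ at `𝔘`):
(1) `x` is pathological iff `⟪x,y⟫ = 0` for all `y`;
(2) if the family is nonpathological and a basis simultaneously orthogonalizes it, then
`⟪v,v⟫ ≠ 0` for every basis vector `v`. -/
theorem pathological_iff_germ_zero_and_nondegenerate
    {K V I : Type*} [Field K] [AddCommGroup V] [Module K V]
    [Preorder I] [IsDirected I (· ≤ ·)]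
    (𝔘 : Ultrafilter I) (hup : ∀ i : I, {j : I | i ≤ j} ∈ 𝔘)
    (B : I → V →ₗ[K] V →ₗ[K] K)
    (hsym : ∀ i, ∀ x y, B i x y = B i y x) :
    (∀ x : V,
      (∀ S : Submodule K V, FiniteDimensional K S →
          {i : I | ∀ s ∈ S, B i x s = 0} ∈ 𝔘) ↔
        ∀ y : V,
          (Filter.Germ.ofFun (fun i => B i x y) : Filter.Germ (𝔘 : Filter I) K) = 0) ∧
    ((∀ x : V,
        (∀ S : Submodule K V, FiniteDimensional K S →
          {i : I | ∀ s ∈ S, B i x s = 0} ∈ 𝔘) → x = 0) →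
      ∀ (s : Set V) (b : Module.Basis s K V),
        (∀ i, ∀ v w : s, v ≠ w → B i (b v) (b w) = 0) →
        ∀ v : s,
          (Filter.Germ.ofFun (fun i => B i (b v) (b v)) :
            Filter.Germ (𝔘 : Filter I) K) ≠ 0) := by
  have germ_zero : ∀ (f : I → K),
      (Filter.Germ.ofFun f : Filter.Germ (𝔘 : Filter I) K) = 0 ↔
        {i : I | f i = 0} ∈ 𝔘 := by
    intro f
    constructor
    · intro h
      exact Filter.Germ.coe_eq.mp h
    · intro h
      exact Filter.Germ.coe_eq.mpr h
  have part1 : ∀ x : V,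
      (∀ S : Submodule K V, FiniteDimensional K S →
          {i : I | ∀ s ∈ S, B i x s = 0} ∈ 𝔘) ↔
        ∀ y : V,
          (Filter.Germ.ofFun (fun i => B i x y) : Filter.Germ (𝔘 : Filter I) K) = 0 := by
    intro x
    constructor
    · intro hpath y
      rw [germ_zero]
      have h := hpath (Submodule.span K {y}) (by
        exact Module.Finite.span_singleton K y)
      filter_upwards [h] with i hi
      exact hi y (Submodule.mem_span_singleton_self y)
    · intro hy S hS
      obtain ⟨t, ht⟩ : S.FG := (Submodule.fg_iff_finiteDimensional S).mpr hS
      have hall : ∀ u ∈ t, {i : I | B i x u = 0} ∈ 𝔘 := fun u _ =>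
        (germ_zero _).mp (hy u)
      have hmem : ∀ᶠ i in (𝔘 : Filter I), ∀ u ∈ t, B i x u = 0 :=
        (Filter.eventually_all_finset t).mpr hall
      filter_upwards [hmem] with i hi
      have hker : S ≤ LinearMap.ker (B i x) := by
        rw [← ht]
        exact Submodule.span_le.mpr fun u hu => hi u hu
      exact fun u hu => hker hu
  refine ⟨part1, ?_⟩
  intro hnp s b horth v hzero
  have hzero' : {i : I | B i (b v) (b v) = 0} ∈ 𝔘 := (germ_zero _).mp hzero
  have hpath : ∀ S : Submodule K V, FiniteDimensional K S →
      {i : I | ∀ u ∈ S, B i (b v) u = 0} ∈ 𝔘 := by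
    apply (part1 (b v)).mpr
    intro y
    rw [germ_zero]
    have key : ∀ i : I, B i (b v) y = b.repr y v * B i (b v) (b v) := by
      intro i
      conv_lhs => rw [← b.linearCombination_repr y]
      rw [Finsupp.linearCombination_apply, map_finsuppSum]
      rw [Finsupp.sum_eq_single v]
      · rw [map_smul]; simp [smul_eq_mul]
      · intro w _ hwv
        rw [map_smul]
        simp [horth i v w (Ne.symm hwv)]
      · simp
    filter_upwards [hzero'] with i hi
    rw [key i, hi, mul_zero]
  exact b.ne_zero v (hnp (b v) hpath)
end

section
/- Let K = ℝ or ℂ, let V be a K-vector space, and let {⟨·,·⟩ᵢ}_{i∈I} be a bounded family of inner products on V, where I is a directed preordered set and 𝔘 an ultrafilter on I containing every up-set [i,→). Then there exists a unique symmetric K-bilinear form st⟨·,·⟩ : V × V → K such that for all x,y ∈ V and every real ε > 0 the set {i ∈ I : |⟨x,y⟩ᵢ − st⟨x,y⟩| < ε} belongs to 𝔘; moreover the radical of st⟨·,·⟩ equals the set of negligible elements of V. In particular, if 0 is the only negligible element (the family is robust), then st⟨·,·⟩ is nondegenerate. -/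
/-- The real-complex case (`K = ℝ` or `K = ℂ`, captured by `RCLike K`): for a bounded
family `{Bᵢ}` of inner products on `V` indexed by a directed preorder `I` with an
ultrafilter `𝔘` containing all up-sets, there is a unique symmetric `K`-bilinear form
`st⟨·,·⟩` with `{i : |Bᵢ x y − st x y| < ε} ∈ 𝔘` for all `x, y` and all real `ε > 0`;
its radical is exactly the set of negligible elements, so if the family is robust then
`st⟨·,·⟩` is nondegenerate. -/
theorem exists_unique_standardPart_form
    {K V I : Type*} [RCLike K] [AddCommGroup V] [Module K V]
    [Preorder I] [IsDirected I (· ≤ ·)]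
    (𝔘 : Ultrafilter I) (hup : ∀ i : I, {j : I | i ≤ j} ∈ 𝔘)
    (B : I → V →ₗ[K] V →ₗ[K] K)
    (hsym : ∀ i, ∀ x y, B i x y = B i y x)
    (hbdd : ∀ x y : V, ∃ M : ℝ, {i : I | ‖B i x y‖ < M} ∈ 𝔘) :
    (∃! T : V →ₗ[K] V →ₗ[K] K,
      (∀ x y, T x y = T y x) ∧
      (∀ x y : V, ∀ ε : ℝ, 0 < ε → {i : I | ‖B i x y - T x y‖ < ε} ∈ 𝔘)) ∧
    (∀ T : V →ₗ[K] V →ₗ[K] K,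
      ((∀ x y, T x y = T y x) ∧
        (∀ x y : V, ∀ ε : ℝ, 0 < ε → {i : I | ‖B i x y - T x y‖ < ε} ∈ 𝔘)) →
      (∀ x : V, (∀ y : V, T x y = 0) ↔
          (∀ y : V, ∀ ε : ℝ, 0 < ε → {i : I | ‖B i x y‖ < ε} ∈ 𝔘)) ∧
      ((∀ x : V, (∀ y : V, ∀ ε : ℝ, 0 < ε → {i : I | ‖B i x y‖ < ε} ∈ 𝔘) → x = 0) →
        ∀ x : V, (∀ y : V, T x y = 0) → x = 0)) := by
  classical
  have hNB : (𝔘 : Filter I).NeBot := 𝔘.neBot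
  -- existence of ultralimits
  have hex : ∀ x y : V, ∃ c : K,
      Filter.Tendsto (fun i => B i x y) 𝔘 (nhds c) := by
    intro x y
    obtain ⟨M, hM⟩ := hbdd x y
    have hle : (𝔘.map (fun i => B i x y) : Filter K) ≤
        Filter.principal (Metric.closedBall (0 : K) M) := by
      rw [Filter.le_principal_iff, Ultrafilter.coe_map, Filter.mem_map]
      refine Filter.mem_of_superset hM ?_
      intro i hi
      simp only [Set.mem_setOf_eq] at hi
      simp [Metric.mem_closedBall, dist_zero_right, le_of_lt hi]
    obtain ⟨c, _, hc⟩ :=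
      (ProperSpace.isCompact_closedBall (0 : K) M).ultrafilter_le_nhds
        (𝔘.map (fun i => B i x y)) (by exact_mod_cast hle)
    exact ⟨c, hc⟩
  choose L hL using hex
  -- characterize the ε-condition as tendsto
  have hchar : ∀ (x y : V) (c : K),
      (∀ ε : ℝ, 0 < ε → {i : I | ‖B i x y - c‖ < ε} ∈ 𝔘) ↔
        Filter.Tendsto (fun i => B i x y) 𝔘 (nhds c) := by
    intro x y c
    rw [Metric.tendsto_nhds]
    constructor
    · intro h ε hε
      filter_upwards [h ε hε] with i hi
      simpa [dist_eq_norm] using hi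
    · intro h ε hε
      filter_upwards [h ε hε] with i hi
      simpa [dist_eq_norm] using hi
  -- bilinearity of L
  have hLadd₁ : ∀ x x' y : V, L (x + x') y = L x y + L x' y := by
    intro x x' y
    refine tendsto_nhds_unique (hL (x + x') y) ?_
    have := (hL x y).add (hL x' y)
    simpa using this
  have hLsmul₁ : ∀ (c : K) (x y : V), L (c • x) y = c • L x y := by
    intro c x y
    refine tendsto_nhds_unique (hL (c • x) y) ?_
    have := (hL x y).const_mul c
    simpa [smul_eq_mul] using this
  have hLsym : ∀ x y : V, L x y = L y x := by
    intro x y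
    refine tendsto_nhds_unique (hL x y) ?_
    have := hL y x
    refine this.congr ?_
    intro i; exact (hsym i y x)
  have hLadd₂ : ∀ x y y' : V, L x (y + y') = L x y + L x y' := by
    intro x y y'
    rw [hLsym, hLadd₁, hLsym y x, hLsym y' x]
  have hLsmul₂ : ∀ (c : K) (x y : V), L x (c • y) = c • L x y := by
    intro c x y
    rw [hLsym, hLsmul₁, hLsym y x]
  set T₀ : V →ₗ[K] V →ₗ[K] K :=
    LinearMap.mk₂ K L hLadd₁ hLsmul₁ hLadd₂ hLsmul₂ with hT₀
  have hT₀app : ∀ x y, T₀ x y = L x y := fun x y => rfl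
  have hT₀sym : ∀ x y, T₀ x y = T₀ y x := fun x y => hLsym x y
  have hT₀eps : ∀ x y : V, ∀ ε : ℝ, 0 < ε →
      {i : I | ‖B i x y - T₀ x y‖ < ε} ∈ 𝔘 := by
    intro x y
    exact (hchar x y (T₀ x y)).mpr (hL x y)
  -- uniqueness
  have huniq : ∀ T : V →ₗ[K] V →ₗ[K] K,
      ((∀ x y, T x y = T y x) ∧
        (∀ x y : V, ∀ ε : ℝ, 0 < ε → {i : I | ‖B i x y - T x y‖ < ε} ∈ 𝔘)) →
      T = T₀ := by
    intro T ⟨_, hTe⟩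
    ext x y
    exact tendsto_nhds_unique ((hchar x y (T x y)).mp (hTe x y)) (hL x y)
  constructor
  · exact ⟨T₀, ⟨hT₀sym, hT₀eps⟩, huniq⟩
  · intro T hT
    have hTeq : T = T₀ := huniq T hT
    subst hTeq
    have hrad : ∀ x : V, (∀ y : V, T₀ x y = 0) ↔
        (∀ y : V, ∀ ε : ℝ, 0 < ε → {i : I | ‖B i x y‖ < ε} ∈ 𝔘) := by
      intro x
      constructor
      · intro h y ε hε
        have := hT₀eps x y ε hε
        simp only [h y, sub_zero] at this
        exact this
      · intro h y
        have h0 : Filter.Tendsto (fun i => B i x y) 𝔘 (nhds (0 : K)) := by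
          refine (hchar x y 0).mp ?_
          intro ε hε
          simpa using h y ε hε
        exact tendsto_nhds_unique (hL x y) h0
    exact ⟨hrad, fun hrob x hx => hrob x ((hrad x).mp hx)⟩
end
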